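/- The Majumdar–Dhar map σ_G is a bijection between the set of allowed stable configurations A_G and the set of spanning trees T_G of a finite connected multigraph G with sink s. -/

import Mathlib

open Set

noncomputable section

/-- Number of oriented edges with tail `x` (the degree of `x` in the multigraph). -/
def degD {Vp D : Type*} (tl : D → Vp) (x : Vp) : ℕ := {e : D | tl e = x}.ncard

/-- Unburnt sets of the Burning Algorithm: `U 0 = V⁺ \ {s}` and
`U (n+1) = {v ∈ U n : η v < deg_{U n} v}`. -/
def Up {Vp D : Type*} (tl hd : D → Vp) (s : Vp) (η : Vp → ℕ) : ℕ → Set Vp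
  | 0 => {v | v ≠ s}
  | n + 1 => {v ∈ Up tl hd s η n |
      η v < Set.ncard {e : D | tl e = v ∧ hd e ∈ Up tl hd s η n}}

/-- Burning sets: `B 0 = {s}` and `B (n+1) = {v ∈ U n : η v ≥ deg_{U n} v}`. -/
def Bp {Vp D : Type*} (tl hd : D → Vp) (s : Vp) (η : Vp → ℕ) : ℕ → Set Vp
  | 0 => {s}
  | n + 1 => {v ∈ Up tl hd s η n |
      Set.ncard {e : D | tl e = v ∧ hd e ∈ Up tl hd s η n} ≤ η v}

/-- `P_x`: the set of oriented edges from `x` to the set burning at time `i − 1`. -/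
def PsetB {Vp D : Type*} (tl hd : D → Vp) (s : Vp) (η : Vp → ℕ) (i : ℕ) (x : Vp) :
    Set D :=
  {e : D | tl e = x ∧ hd e ∈ Bp tl hd s η (i - 1)}

/-- `n_x`: the number of edges from `x` to vertices burnt strictly before time `i`. -/
def nBefore {Vp D : Type*} (tl hd : D → Vp) (s : Vp) (η : Vp → ℕ) (i : ℕ) (x : Vp) :
    ℕ :=
  Set.ncard {e : D | tl e = x ∧ hd e ∉ Up tl hd s η (i - 1)}

/-- Stability of a configuration. -/
def StableD {Vp D : Type*} (tl : D → Vp) (s : Vp) (η : Vp → ℕ) : Prop :=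
  ∀ v : Vp, v ≠ s → η v < degD tl v

/-- `η` is allowed: no nonempty set of non-sink vertices is a forbidden
subconfiguration. -/
def AllowedD {Vp D : Type*} (tl hd : D → Vp) (s : Vp) (η : Vp → ℕ) : Prop :=
  ∀ F : Set Vp, F.Nonempty → (∀ v ∈ F, v ≠ s) →
    ¬ (∀ v ∈ F, η v < Set.ncard {e : D | tl e = v ∧ hd e ∈ F})

/-- `t` is the spanning tree `σ_G(η)` of the Majumdar–Dhar construction: for every
vertex `x` burning at time `i ≥ 1`, the tree edge `t x` belongs to `P_x` (it points
to a vertex burning at time `i − 1`) and is the edge `α_{P_x,K_x}⁻¹(η x)`, i.e.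
`α_{P_x,K_x}(t x) = η x` where `K_x` starts at `deg_G x − n_x`. -/
def IsMDTree {Vp D : Type*} (tl hd : D → Vp) (s : Vp)
    (α : Vp → Set D → ℕ → D → ℕ) (η : Vp → ℕ)
    (t : {x : Vp // x ≠ s} → D) : Prop :=
  ∀ i : ℕ, 1 ≤ i → ∀ x : {x : Vp // x ≠ s}, x.val ∈ Bp tl hd s η i →
    t x ∈ PsetB tl hd s η i x.val ∧
    α x.val (PsetB tl hd s η i x.val)
      (degD tl x.val - nBefore tl hd s η i x.val) (t x) = η x.val

/-- `t` encodes a spanning tree of `G` rooted at the sink: every non-sink vertex `x`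
has exactly one outgoing tree edge `t x` (with tail `x`), and following the tree edges
from any vertex leads to the sink `s`. -/
def IsSpanTreeMap {Vp D : Type*} (tl hd : D → Vp) (s : Vp)
    (t : {x : Vp // x ≠ s} → D) : Prop :=
  (∀ x : {x : Vp // x ≠ s}, tl (t x) = x.val) ∧
  ∀ v : Vp, Relation.ReflTransGen
    (fun u w => ∃ h : u ≠ s, hd (t ⟨u, h⟩) = w) v s

/-!
Run the Burning Algorithm on an allowed stable configuration `η` and let `ℓ v` be the time at
which `v` burns (`ℓ s = 0`). A vertex `x` burning at time `i` has at least as many grains as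
edges into the still unburnt set `{ℓ ≥ i}`, and fewer than edges into `{ℓ ≥ i - 1}`: so `η x`
lies in a window whose length is the number of edges from `x` down to level `i - 1`, and `α`
turns `η x` into one of these edges. Following these edges strictly decreases `ℓ`, which gives a
spanning tree in which `ℓ` is the depth. Conversely, for a spanning tree with depth function `ℓ`,
labelling each tree edge by `α` defines a configuration whose values lie in the same windows,
and these windows force the Burning Algorithm to burn exactly the vertices of depth `i` at time
`i`; hence the two constructions are mutually inverse.
-/

namespace MajumdarDhar

theorem ncard_setOf_eq_add_ncard_setOf_not {α : Type*} [Finite α] (p q : α → Prop) :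
    {x | p x}.ncard = {x | p x ∧ q x}.ncard + {x | p x ∧ ¬ q x}.ncard :=
  (ncard_inter_add_ncard_sdiff_eq_ncard {x | p x} {x | q x}).symm

section Levels

variable {Vp D : Type*}

def upDeg (tl hd : D → Vp) (ℓ : Vp → ℕ) (v : Vp) (k : ℕ) : ℕ :=
  {e : D | tl e = v ∧ k ≤ ℓ (hd e)}.ncard

/-- The set `P_x`, for the levels `ℓ`. -/
def downEdges (tl hd : D → Vp) (ℓ : Vp → ℕ) (x : Vp) : Set D :=
  {e : D | tl e = x ∧ ℓ (hd e) = ℓ x - 1}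

/-- The interval `K_x`, for the levels `ℓ`. -/
def burnWindow (tl hd : D → Vp) (ℓ : Vp → ℕ) (x : Vp) : Set ℕ :=
  Set.Ico (upDeg tl hd ℓ x (ℓ x)) (upDeg tl hd ℓ x (ℓ x - 1))

/-- The bijection `α_{P_x,K_x}`, for the levels `ℓ`. -/
def levelLabel (tl hd : D → Vp) (α : Vp → Set D → ℕ → D → ℕ) (ℓ : Vp → ℕ) (x : Vp) :
    D → ℕ :=
  α x (downEdges tl hd ℓ x) (upDeg tl hd ℓ x (ℓ x))

variable {tl hd : D → Vp} {ℓ : Vp → ℕ}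

theorem upDeg_zero (v : Vp) : upDeg tl hd ℓ v 0 = degD tl v := by
  simp [upDeg, degD]

theorem upDeg_antitone [Finite D] (v : Vp) : Antitone (upDeg tl hd ℓ v) :=
  fun _ _ hkm => Set.ncard_le_ncard (fun _ ⟨htl, hk⟩ => ⟨htl, hkm.trans hk⟩)

theorem degD_eq_upDeg_add [Finite D] (v : Vp) (k : ℕ) :
    degD tl v = upDeg tl hd ℓ v k + {e : D | tl e = v ∧ ℓ (hd e) < k}.ncard := by
  rw [degD, ncard_setOf_eq_add_ncard_setOf_not _ (fun e => k ≤ ℓ (hd e))]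
  simp only [upDeg, not_le]

theorem upDeg_pred_eq_add [Finite D] {x : Vp} (hx : ℓ x ≠ 0) :
    upDeg tl hd ℓ x (ℓ x - 1) = upDeg tl hd ℓ x (ℓ x) + (downEdges tl hd ℓ x).ncard := by
  rw [upDeg, ncard_setOf_eq_add_ncard_setOf_not _ (fun e => ℓ x ≤ ℓ (hd e))]
  congr 2 <;> ext e <;> simp only [Set.mem_ofPred_eq, downEdges] <;> grind

theorem ne_zero_of_mem_burnWindow {x : Vp} {m : ℕ} (hm : m ∈ burnWindow tl hd ℓ x) :
    ℓ x ≠ 0 := by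
  intro h0
  simp [burnWindow, h0] at hm

theorem burnWindow_subset_Iio_degD [Finite D] (x : Vp) :
    burnWindow tl hd ℓ x ⊆ Set.Iio (degD tl x) := fun _ hm =>
  hm.2.trans_le ((upDeg_antitone x (Nat.zero_le _)).trans_eq (upDeg_zero x))

end Levels

section Burning

variable {Vp D : Type*} {tl hd : D → Vp} {s : Vp} {η : Vp → ℕ}

theorem Up_antitone : Antitone (Up tl hd s η) :=
  antitone_nat_of_succ_le fun _ _ hv => hv.1

theorem ne_of_mem_Up {n : ℕ} {v : Vp} (hv : v ∈ Up tl hd s η n) : v ≠ s :=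
  Up_antitone (Nat.zero_le n) hv

/-- The unburnt sets form a decreasing chain, and a nonempty set where the chain is stationary
is a forbidden subconfiguration. -/
theorem exists_Up_eq_empty [Finite Vp] (hA : AllowedD tl hd s η) :
    ∃ N, Up tl hd s η N = ∅ := by
  obtain ⟨N, hN⟩ := WellFoundedLT.antitone_chain_condition (Up_antitone (tl := tl) (hd := hd)
    (s := s) (η := η))
  refine ⟨N, Set.not_nonempty_iff_eq_empty.mp fun hne => hA _ hne (fun _ => ne_of_mem_Up) ?_⟩
  intro v hv
  rw [hN (N + 1) N.le_succ] at hv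
  exact hv.2

/-- A forbidden subconfiguration never burns. -/
theorem allowedD_of_Up_eq_empty [Finite D] {N : ℕ} (hN : Up tl hd s η N = ∅) :
    AllowedD tl hd s η := by
  intro F hFne hFs hforb
  have hF : ∀ n, F ⊆ Up tl hd s η n := by
    intro n
    induction n with
    | zero => exact hFs
    | succ n ih =>
      exact fun v hv => ⟨ih hv, (hforb v hv).trans_le
        (Set.ncard_le_ncard fun _ ⟨htl, hhd⟩ => ⟨htl, ih hhd⟩)⟩
  exact hFne.ne_empty (Set.subset_eq_empty (hF N) hN)

/-- `ℓ v` is the time at which the Burning Algorithm burns `v`. -/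
def IsBurnLevel (tl hd : D → Vp) (s : Vp) (η ℓ : Vp → ℕ) : Prop :=
  ∀ n v, v ∈ Up tl hd s η n ↔ n < ℓ v

def burnTime (tl hd : D → Vp) (s : Vp) (η : Vp → ℕ) (v : Vp) : ℕ :=
  sInf {n | v ∉ Up tl hd s η n}

theorem isBurnLevel_burnTime [Finite Vp] (hA : AllowedD tl hd s η) :
    IsBurnLevel tl hd s η (burnTime tl hd s η) := by
  intro n v
  obtain ⟨N, hN⟩ := exists_Up_eq_empty hA
  have hne : {n | v ∉ Up tl hd s η n}.Nonempty := ⟨N, by simp [hN]⟩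
  refine ⟨fun hv => ?_, fun hn => not_not.mp (Nat.notMem_of_lt_sInf hn)⟩
  by_contra! hle
  exact Nat.sInf_mem hne (Up_antitone hle hv)

theorem ncard_edges_mem_Up {ℓ : Vp → ℕ} {n : ℕ} (hn : ∀ w, w ∈ Up tl hd s η n ↔ n < ℓ w)
    (v : Vp) : {e : D | tl e = v ∧ hd e ∈ Up tl hd s η n}.ncard = upDeg tl hd ℓ v (n + 1) := by
  simp only [upDeg, hn, Nat.succ_le_iff]

theorem isBurnLevel_of_mem_burnWindow [Finite D] {ℓ : Vp → ℕ} (hℓ : ∀ v, ℓ v = 0 ↔ v = s)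
    (hη : ∀ v, v ≠ s → η v ∈ burnWindow tl hd ℓ v) : IsBurnLevel tl hd s η ℓ := by
  intro n
  induction n with
  | zero => exact fun v => (hℓ v).not.symm.trans Nat.pos_iff_ne_zero.symm
  | succ n ih =>
    intro v
    change v ∈ Up tl hd s η n ∧ η v < {e : D | tl e = v ∧ hd e ∈ Up tl hd s η n}.ncard ↔ _
    rw [ih, ncard_edges_mem_Up ih]
    constructor
    · rintro ⟨hn, hlt⟩
      have hlow := (hη v ((hℓ v).not.mp (by omega))).1
      by_contra hle
      rw [show ℓ v = n + 1 by omega] at hlow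
      exact hlt.not_ge hlow
    · intro hn
      have hup := (hη v ((hℓ v).not.mp (by omega))).2
      exact ⟨by omega, hup.trans_le (upDeg_antitone v (by omega))⟩

namespace IsBurnLevel

variable {ℓ : Vp → ℕ}

theorem eq_zero_iff (h : IsBurnLevel tl hd s η ℓ) (v : Vp) : ℓ v = 0 ↔ v = s := by
  rw [← not_iff_not, ← Ne, ← Nat.pos_iff_ne_zero, ← h 0 v]
  rfl

theorem unique {ℓ' : Vp → ℕ} (h : IsBurnLevel tl hd s η ℓ) (h' : IsBurnLevel tl hd s η ℓ') :
    ℓ = ℓ' :=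
  funext fun v => eq_of_forall_lt_iff fun n => (h n v).symm.trans (h' n v)

theorem exists_Up_eq_empty [Finite Vp] (h : IsBurnLevel tl hd s η ℓ) :
    ∃ N, Up tl hd s η N = ∅ := by
  obtain ⟨N, hN⟩ := (Set.finite_range ℓ).bddAbove
  exact ⟨N, Set.eq_empty_of_forall_notMem fun v hv =>
    ((h N v).mp hv).not_ge (hN (Set.mem_range_self v))⟩

theorem mem_Bp_iff (h : IsBurnLevel tl hd s η ℓ) (n : ℕ) (v : Vp) :
    v ∈ Bp tl hd s η n ↔ ℓ v = n := by
  cases n with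
  | zero => exact (h.eq_zero_iff v).symm
  | succ n =>
    have hunburnt := h (n + 1) v
    change v ∈ Up tl hd s η n ∧ η v < _ ↔ _ at hunburnt
    change v ∈ Up tl hd s η n ∧ _ ≤ η v ↔ _
    rw [h n] at hunburnt ⊢
    omega

/-- Stability is only needed for the vertices burning at time `1`, where the upper end of the
window is the full degree. -/
theorem mem_burnWindow (h : IsBurnLevel tl hd s η ℓ) (hS : StableD tl s η) {v : Vp}
    (hv : v ≠ s) : η v ∈ burnWindow tl hd ℓ v := by
  obtain ⟨i, hi⟩ : ∃ i, ℓ v = i + 1 :=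
    Nat.exists_eq_succ_of_ne_zero ((h.eq_zero_iff v).not.mpr hv)
  have hburnt : v ∉ Up tl hd s η (i + 1) := by rw [h]; omega
  have hunburnt : v ∈ Up tl hd s η i := by rw [h]; omega
  rw [burnWindow, hi, Nat.add_sub_cancel]
  refine ⟨?_, ?_⟩
  · rw [← ncard_edges_mem_Up (h i)]
    exact not_lt.mp fun hlt => hburnt ⟨hunburnt, hlt⟩
  · cases i with
    | zero => simpa only [upDeg_zero] using hS v hv
    | succ i =>
      rw [← ncard_edges_mem_Up (h i)]
      exact hunburnt.2

theorem PsetB_eq (h : IsBurnLevel tl hd s η ℓ) {i : ℕ} {x : Vp} (hx : x ∈ Bp tl hd s η i) :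
    PsetB tl hd s η i x = downEdges tl hd ℓ x := by
  ext e
  simp only [PsetB, downEdges, Set.mem_ofPred_eq, h.mem_Bp_iff, (h.mem_Bp_iff i x).mp hx]

theorem degD_sub_nBefore [Finite D] (h : IsBurnLevel tl hd s η ℓ) {i : ℕ} {x : Vp}
    (hi : 1 ≤ i) (hx : x ∈ Bp tl hd s η i) :
    degD tl x - nBefore tl hd s η i x = upDeg tl hd ℓ x (ℓ x) := by
  have hn : nBefore tl hd s η i x = {e : D | tl e = x ∧ ℓ (hd e) < i}.ncard := by
    simp only [nBefore, h (i - 1), not_lt]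
    congr! 4
    omega
  rw [hn, degD_eq_upDeg_add x i, Nat.add_sub_cancel, (h.mem_Bp_iff i x).mp hx]

theorem isMDTree [Finite D] (h : IsBurnLevel tl hd s η ℓ) {α : Vp → Set D → ℕ → D → ℕ}
    {t : {x : Vp // x ≠ s} → D}
    (ht : ∀ x : {x : Vp // x ≠ s},
      t x ∈ downEdges tl hd ℓ x ∧ levelLabel tl hd α ℓ x (t x) = η x) :
    IsMDTree tl hd s α η t := by
  intro i hi x hx
  rw [h.PsetB_eq hx, h.degD_sub_nBefore hi hx]
  exact ht x

end IsBurnLevel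

end Burning

section TreeDepth

variable {Vp D : Type*} {tl hd : D → Vp} {s : Vp}

open Classical in
def treeParent (hd : D → Vp) (s : Vp) (t : {x : Vp // x ≠ s} → D) (v : Vp) : Vp :=
  if h : v = s then s else hd (t ⟨v, h⟩)

def treeDepth (hd : D → Vp) (s : Vp) (t : {x : Vp // x ≠ s} → D) (v : Vp) : ℕ :=
  sInf {n | (treeParent hd s t)^[n] v = s}

variable {t : {x : Vp // x ≠ s} → D}

theorem treeParent_val (x : {x : Vp // x ≠ s}) : treeParent hd s t x = hd (t x) :=
  dif_neg x.prop

theorem exists_iterate_treeParent_eq (ht : IsSpanTreeMap tl hd s t) (v : Vp) :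
    ∃ n, (treeParent hd s t)^[n] v = s := by
  induction ht.2 v using Relation.ReflTransGen.head_induction_on with
  | refl => exact ⟨0, rfl⟩
  | head hstep _ ih =>
    obtain ⟨n, hn⟩ := ih
    obtain ⟨hne, rfl⟩ := hstep
    exact ⟨n + 1, by rwa [Function.iterate_succ_apply, treeParent_val ⟨_, hne⟩]⟩

theorem treeDepth_sink : treeDepth hd s t s = 0 :=
  Nat.sInf_eq_zero.mpr (Or.inl rfl)

theorem treeDepth_eq_succ (ht : IsSpanTreeMap tl hd s t) (x : {x : Vp // x ≠ s}) :
    treeDepth hd s t x = treeDepth hd s t (hd (t x)) + 1 := by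
  have hpos : 1 ≤ treeDepth hd s t x := by
    refine Nat.one_le_iff_ne_zero.mpr fun h0 => ?_
    have hmem : treeDepth hd s t x ∈ {n | (treeParent hd s t)^[n] x = s} :=
      Nat.sInf_mem (exists_iterate_treeParent_eq ht x)
    rw [h0] at hmem
    exact x.prop hmem
  rw [treeDepth, ← Nat.sInf_add hpos]
  simp only [Function.iterate_succ_apply, treeParent_val, treeDepth]

theorem treeDepth_eq_zero_iff (ht : IsSpanTreeMap tl hd s t) (v : Vp) :
    treeDepth hd s t v = 0 ↔ v = s := by
  refine ⟨fun h0 => ?_, by rintro rfl; exact treeDepth_sink⟩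
  by_contra hv
  simp [treeDepth_eq_succ ht ⟨v, hv⟩] at h0

theorem mem_downEdges_treeDepth (ht : IsSpanTreeMap tl hd s t) (x : {x : Vp // x ≠ s}) :
    t x ∈ downEdges tl hd (treeDepth hd s t) x := by
  have := treeDepth_eq_succ ht x
  exact ⟨ht.1 x, by omega⟩

theorem eq_treeDepth (ht : IsSpanTreeMap tl hd s t) {ℓ : Vp → ℕ} (hs : ℓ s = 0)
    (hℓ : ∀ x : {x : Vp // x ≠ s}, ℓ x = ℓ (hd (t x)) + 1) : ℓ = treeDepth hd s t := by
  funext v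
  induction ht.2 v using Relation.ReflTransGen.head_induction_on with
  | refl => rw [hs, treeDepth_sink]
  | head hstep _ ih =>
    obtain ⟨hne, rfl⟩ := hstep
    rw [hℓ ⟨_, hne⟩, ih, ← treeDepth_eq_succ ht ⟨_, hne⟩]

theorem isSpanTreeMap_of_level {ℓ : Vp → ℕ} (hℓ : ∀ v, ℓ v = 0 ↔ v = s)
    (htl : ∀ x : {x : Vp // x ≠ s}, tl (t x) = x)
    (hstep : ∀ x : {x : Vp // x ≠ s}, ℓ x = ℓ (hd (t x)) + 1) :
    IsSpanTreeMap tl hd s t := by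
  refine ⟨htl, fun v => ?_⟩
  induction hn : ℓ v generalizing v with
  | zero => rw [(hℓ v).mp hn]
  | succ n ih =>
    have hv : v ≠ s := (hℓ v).not.mp (by omega)
    have hparent : ℓ (hd (t ⟨v, hv⟩)) = n := by
      have := hstep ⟨v, hv⟩
      dsimp only at this
      omega
    exact Relation.ReflTransGen.head ⟨hv, rfl⟩ (ih _ hparent)

end TreeDepth

section Labelling

variable {Vp D : Type*} {tl hd : D → Vp} {s : Vp}

def IsLabelling (tl : D → Vp) (α : Vp → Set D → ℕ → D → ℕ) : Prop :=
  ∀ (x : Vp) (P : Set D) (j : ℕ), P.Nonempty → (∀ e ∈ P, tl e = x) →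
    Set.BijOn (α x P j) P (Set.Ico j (j + P.ncard))

variable {α : Vp → Set D → ℕ → D → ℕ} {ℓ : Vp → ℕ}

theorem IsLabelling.bijOn_levelLabel [Finite D] (hα : IsLabelling tl α) {x : Vp}
    (hx : ℓ x ≠ 0) (hP : (downEdges tl hd ℓ x).Nonempty) :
    Set.BijOn (levelLabel tl hd α ℓ x) (downEdges tl hd ℓ x) (burnWindow tl hd ℓ x) := by
  rw [burnWindow, upDeg_pred_eq_add hx]
  exact hα x _ _ hP fun _ he => he.1

theorem IsLabelling.exists_levelLabel_eq [Finite D] (hα : IsLabelling tl α) {x : Vp} {m : ℕ}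
    (hm : m ∈ burnWindow tl hd ℓ x) :
    ∃ e ∈ downEdges tl hd ℓ x, levelLabel tl hd α ℓ x e = m := by
  have hx := ne_zero_of_mem_burnWindow hm
  have hP : (downEdges tl hd ℓ x).Nonempty := by
    rw [← Set.ncard_pos]
    have hlen := upDeg_pred_eq_add (tl := tl) (hd := hd) hx
    simp only [burnWindow, Set.mem_Ico] at hm
    omega
  exact (hα.bijOn_levelLabel hx hP).surjOn hm

open Classical in
/-- The edges `α_{P_x,K_x}⁻¹(η x)`, with the fallback `fb` where they do not exist. -/
def treeOf (tl hd : D → Vp) (α : Vp → Set D → ℕ → D → ℕ) (ℓ η : Vp → ℕ)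
    (fb : {x : Vp // x ≠ s} → D) (x : {x : Vp // x ≠ s}) : D :=
  if h : ∃ e ∈ downEdges tl hd ℓ x, levelLabel tl hd α ℓ x e = η x then h.choose else fb x

open Classical in
def configOf (tl hd : D → Vp) (s : Vp) (α : Vp → Set D → ℕ → D → ℕ) (ℓ : Vp → ℕ)
    (t : {x : Vp // x ≠ s} → D) (v : Vp) : ℕ :=
  if h : v = s then 0 else levelLabel tl hd α ℓ v (t ⟨v, h⟩)

variable {η : Vp → ℕ} {fb : {x : Vp // x ≠ s} → D}

theorem treeOf_spec [Finite D] (hα : IsLabelling tl α) {x : {x : Vp // x ≠ s}}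
    (hη : η x ∈ burnWindow tl hd ℓ x) :
    treeOf tl hd α ℓ η fb x ∈ downEdges tl hd ℓ x ∧
      levelLabel tl hd α ℓ x (treeOf tl hd α ℓ η fb x) = η x := by
  have h := hα.exists_levelLabel_eq hη
  rw [treeOf, dif_pos h]
  exact h.choose_spec

theorem treeOf_eq [Finite D] (hα : IsLabelling tl α) {x : {x : Vp // x ≠ s}} {e : D}
    (hx : ℓ x ≠ 0) (he : e ∈ downEdges tl hd ℓ x) (hη : levelLabel tl hd α ℓ x e = η x) :
    treeOf tl hd α ℓ η fb x = e := by
  have hbij := hα.bijOn_levelLabel hx ⟨e, he⟩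
  have hspec := treeOf_spec (fb := fb) hα (hη ▸ hbij.mapsTo he)
  exact hbij.injOn hspec.1 he (hspec.2.trans hη.symm)

theorem configOf_sink (t : {x : Vp // x ≠ s} → D) : configOf tl hd s α ℓ t s = 0 :=
  dif_pos rfl

theorem configOf_val (t : {x : Vp // x ≠ s} → D) (x : {x : Vp // x ≠ s}) :
    configOf tl hd s α ℓ t x = levelLabel tl hd α ℓ x (t x) :=
  dif_neg x.prop

end Labelling

section Bijection

variable {Vp D : Type*} [Finite D] {tl hd : D → Vp} {s : Vp}
  {α : Vp → Set D → ℕ → D → ℕ}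

/-- The Majumdar–Dhar map `σ_G`. -/
def mdMap (tl hd : D → Vp) (s : Vp) (α : Vp → Set D → ℕ → D → ℕ)
    (fb : {x : Vp // x ≠ s} → D) (η : Vp → ℕ) : {x : Vp // x ≠ s} → D :=
  treeOf tl hd α (burnTime tl hd s η) η fb

/-- The inverse of `σ_G`. -/
def mdConfig (tl hd : D → Vp) (s : Vp) (α : Vp → Set D → ℕ → D → ℕ)
    (t : {x : Vp // x ≠ s} → D) : Vp → ℕ :=
  configOf tl hd s α (treeDepth hd s t) t

variable {η : Vp → ℕ} {t : {x : Vp // x ≠ s} → D}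

theorem mdMap_spec [Finite Vp] (hα : IsLabelling tl α) (hS : StableD tl s η)
    (hA : AllowedD tl hd s η) (fb : {x : Vp // x ≠ s} → D) (x : {x : Vp // x ≠ s}) :
    mdMap tl hd s α fb η x ∈ downEdges tl hd (burnTime tl hd s η) x ∧
      levelLabel tl hd α (burnTime tl hd s η) x (mdMap tl hd s α fb η x) = η x :=
  treeOf_spec hα ((isBurnLevel_burnTime hA).mem_burnWindow hS x.prop)

theorem isMDTree_mdMap [Finite Vp] (hα : IsLabelling tl α) (hS : StableD tl s η)
    (hA : AllowedD tl hd s η) (fb : {x : Vp // x ≠ s} → D) :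
    IsMDTree tl hd s α η (mdMap tl hd s α fb η) :=
  (isBurnLevel_burnTime hA).isMDTree (mdMap_spec hα hS hA fb)

theorem burnTime_eq_succ [Finite Vp] (hα : IsLabelling tl α) (hS : StableD tl s η)
    (hA : AllowedD tl hd s η) (fb : {x : Vp // x ≠ s} → D) (x : {x : Vp // x ≠ s}) :
    burnTime tl hd s η x = burnTime tl hd s η (hd (mdMap tl hd s α fb η x)) + 1 := by
  have hx := ((isBurnLevel_burnTime hA).eq_zero_iff x).not.mpr x.prop
  have hhd := (mdMap_spec hα hS hA fb x).1.2
  omega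

theorem isSpanTreeMap_mdMap [Finite Vp] (hα : IsLabelling tl α) (hS : StableD tl s η)
    (hA : AllowedD tl hd s η) (fb : {x : Vp // x ≠ s} → D) :
    IsSpanTreeMap tl hd s (mdMap tl hd s α fb η) :=
  isSpanTreeMap_of_level (isBurnLevel_burnTime hA).eq_zero_iff
    (fun x => (mdMap_spec hα hS hA fb x).1.1) (burnTime_eq_succ hα hS hA fb)

theorem mdConfig_mdMap [Finite Vp] (hα : IsLabelling tl α) (h0 : η s = 0)
    (hS : StableD tl s η) (hA : AllowedD tl hd s η) (fb : {x : Vp // x ≠ s} → D) :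
    mdConfig tl hd s α (mdMap tl hd s α fb η) = η := by
  have hdepth : treeDepth hd s (mdMap tl hd s α fb η) = burnTime tl hd s η :=
    (eq_treeDepth (isSpanTreeMap_mdMap hα hS hA fb)
      (((isBurnLevel_burnTime hA).eq_zero_iff s).mpr rfl) (burnTime_eq_succ hα hS hA fb)).symm
  funext v
  rw [mdConfig, hdepth]
  by_cases hv : v = s
  · rw [hv, configOf_sink, h0]
  · exact (configOf_val _ ⟨v, hv⟩).trans (mdMap_spec hα hS hA fb ⟨v, hv⟩).2

theorem mdConfig_mem_burnWindow (hα : IsLabelling tl α) (ht : IsSpanTreeMap tl hd s t)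
    {v : Vp} (hv : v ≠ s) : mdConfig tl hd s α t v ∈ burnWindow tl hd (treeDepth hd s t) v := by
  have hx := (treeDepth_eq_zero_iff ht v).not.mpr hv
  have he := mem_downEdges_treeDepth ht ⟨v, hv⟩
  rw [mdConfig, configOf_val _ ⟨v, hv⟩]
  exact (hα.bijOn_levelLabel hx ⟨_, he⟩).mapsTo he

theorem isBurnLevel_mdConfig (hα : IsLabelling tl α) (ht : IsSpanTreeMap tl hd s t) :
    IsBurnLevel tl hd s (mdConfig tl hd s α t) (treeDepth hd s t) :=
  isBurnLevel_of_mem_burnWindow (treeDepth_eq_zero_iff ht) fun _ =>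
    mdConfig_mem_burnWindow hα ht

theorem mdConfig_mem [Finite Vp] (hα : IsLabelling tl α) (ht : IsSpanTreeMap tl hd s t) :
    mdConfig tl hd s α t s = 0 ∧ StableD tl s (mdConfig tl hd s α t) ∧
      AllowedD tl hd s (mdConfig tl hd s α t) :=
  ⟨configOf_sink t,
    fun v hv => burnWindow_subset_Iio_degD v (mdConfig_mem_burnWindow hα ht hv),
    allowedD_of_Up_eq_empty (isBurnLevel_mdConfig hα ht).exists_Up_eq_empty.choose_spec⟩

theorem mdMap_mdConfig [Finite Vp] (hα : IsLabelling tl α) (ht : IsSpanTreeMap tl hd s t)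
    (fb : {x : Vp // x ≠ s} → D) : mdMap tl hd s α fb (mdConfig tl hd s α t) = t := by
  have hburn : burnTime tl hd s (mdConfig tl hd s α t) = treeDepth hd s t :=
    (isBurnLevel_burnTime (mdConfig_mem hα ht).2.2).unique (isBurnLevel_mdConfig hα ht)
  funext x
  rw [mdMap, hburn]
  exact treeOf_eq hα ((treeDepth_eq_zero_iff ht x).not.mpr x.prop)
    (mem_downEdges_treeDepth ht x) (configOf_val t x).symm

end Bijection

end MajumdarDhar

theorem stmt_8_general {Vp D : Type*} [Fintype Vp] [Fintype D]
    (tl hd : D → Vp)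
    (s : Vp)
    (hconn : ∀ v : Vp,
      Relation.ReflTransGen (fun u w => ∃ e : D, tl e = u ∧ hd e = w) v s)
    (α : Vp → Set D → ℕ → D → ℕ)
    (hα : ∀ (x : Vp) (P : Set D) (j : ℕ), P.Nonempty → (∀ e ∈ P, tl e = x) →
      Set.BijOn (α x P j) P (Set.Ico j (j + P.ncard))) :
    ∃ σ : (Vp → ℕ) → ({x : Vp // x ≠ s} → D),
      (∀ η : Vp → ℕ,
        η ∈ {η : Vp → ℕ | η s = 0 ∧ StableD tl s η ∧ AllowedD tl hd s η} →
        IsMDTree tl hd s α η (σ η)) ∧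
      Set.BijOn σ
        {η : Vp → ℕ | η s = 0 ∧ StableD tl s η ∧ AllowedD tl hd s η}
        {t : {x : Vp // x ≠ s} → D | IsSpanTreeMap tl hd s t} := by
  open MajumdarDhar in
  have hD : ∀ x : {x : Vp // x ≠ s}, Nonempty D := fun x => by
    obtain ⟨_, ⟨e, -⟩, -⟩ := (hconn x).cases_head.resolve_left x.prop
    exact ⟨e⟩
  have fb : {x : Vp // x ≠ s} → D := fun x => (hD x).some
  refine ⟨mdMap tl hd s α fb, fun η ⟨_, hS, hA⟩ => isMDTree_mdMap hα hS hA fb, ?_⟩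
  refine Set.InvOn.bijOn (f' := mdConfig tl hd s α) ⟨?_, ?_⟩ ?_ ?_
  · exact fun η ⟨h0, hS, hA⟩ => mdConfig_mdMap hα h0 hS hA fb
  · exact fun t ht => mdMap_mdConfig hα ht fb
  · exact fun η ⟨_, hS, hA⟩ => isSpanTreeMap_mdMap hα hS hA fb
  · exact fun t ht => mdConfig_mem hα ht

/-- the Majumdar–Dhar map `σ_G` is a bijection between the set `A_G` of
allowed stable configurations (normalized to vanish at the sink) and the set `T_G` of
spanning trees of the finite connected multigraph `G` with sink `s`. -/
theorem stmt_8 {Vp D : Type*} [Fintype Vp] [Fintype D]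
    (tl hd : D → Vp) (rev : D → D)
    (hrev : ∀ e : D, tl (rev e) = hd e ∧ hd (rev e) = tl e ∧ rev (rev e) = e)
    (hloop : ∀ e : D, tl e ≠ hd e)
    (s : Vp)
    (hconn : ∀ v : Vp,
      Relation.ReflTransGen (fun u w => ∃ e : D, tl e = u ∧ hd e = w) v s)
    (α : Vp → Set D → ℕ → D → ℕ)
    (hα : ∀ (x : Vp) (P : Set D) (j : ℕ), P.Nonempty → (∀ e ∈ P, tl e = x) →
      Set.BijOn (α x P j) P (Set.Ico j (j + P.ncard))) :
    ∃ σ : (Vp → ℕ) → ({x : Vp // x ≠ s} → D),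
      (∀ η : Vp → ℕ,
        η ∈ {η : Vp → ℕ | η s = 0 ∧ StableD tl s η ∧ AllowedD tl hd s η} →
        IsMDTree tl hd s α η (σ η)) ∧
      Set.BijOn σ
        {η : Vp → ℕ | η s = 0 ∧ StableD tl s η ∧ AllowedD tl hd s η}
        {t : {x : Vp // x ≠ s} → D | IsSpanTreeMap tl hd s t} :=
  stmt_8_general tl hd s hconn α hα
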